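/- The no-mixed-state assumption cannot be dropped for deadlock-freeness preservation: there exist two communicating systems S_1 and S_2 over disjoint participant sets, a set of interfaces H = {h_1, h_2} for {S_1, S_2} (whose interface CFSMs contain mixed states), a connection model CM for H, and a connection policy K for H complying with CM, such that S_1, S_2 and K are all deadlock-free, but the initial configuration of the multicomposition MC({S_1, S_2}, K) is a deadlock configuration, so MC({S_1, S_2}, K) is not deadlock-free. -/

import Mathlib

namespace CFSM

/-- Direction of a communication action: output (`!`) or input (`?`). -/
inductive Dir : Type where
  | out : Dir
  | inp : Dir
deriving DecidableEq

instance : Fintype Dir :=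
  ⟨{Dir.out, Dir.inp}, fun x => by cases x <;> simp⟩

/-- An action `pq!a` (output) or `pq?a` (input) over participants `P` and messages `A`:
`snd` is the sender `p`, `rcv` the receiver `q`, `msg` the message `a`. -/
structure Act (P : Type) (A : Type) : Type where
  snd : P
  rcv : P
  dir : Dir
  msg : A

instance {P A : Type} [Finite P] [Finite A] : Finite (Act P A) :=
  Finite.of_injective (fun l => (l.snd, l.rcv, l.dir, l.msg))
    (fun a b h => by
      cases a; cases b
      simp only [Prod.mk.injEq] at h
      obtain ⟨h1, h2, h3, h4⟩ := h
      subst h1; subst h2; subst h3; subst h4; rfl)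

/-- The subject of an action: the sender of an output, the receiver of an input. -/
def Act.subject {P A : Type} (l : Act P A) : P :=
  match l.dir with
  | .out => l.snd
  | .inp => l.rcv

/-- A communicating system over participants `P` and messages `A`:
one machine (state type, initial state and transition relation) per participant. -/
structure CS (P : Type) (A : Type) : Type 1 where
  St : P → Type
  init : ∀ p, St p
  delta : ∀ p, Set (St p × Act P A × St p)

/-- All actions of the machine of participant `p` have subject `p`
(the name of the machine) and distinct endpoints. -/
def CS.WellFormed {P A : Type} (S : CS P A) : Prop :=
  ∀ p t, t ∈ S.delta p → ((t.2.1 : Act P A).subject = p ∧ t.2.1.snd ≠ t.2.1.rcv)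

/-- A configuration: a local state for each machine and a FIFO buffer
for each ordered pair of participants. -/
structure Config {P A : Type} (S : CS P A) : Type where
  st : ∀ p, S.St p
  ch : P → P → List A

/-- The initial configuration: all machines in their initial state, all channels empty. -/
def CS.initConfig {P A : Type} (S : CS P A) : Config S :=
  ⟨S.init, fun _ _ => []⟩

/-- The labelled transition relation between configurations. -/
def StepL {P A : Type} (S : CS P A) (c : Config S) (l : Act P A) (c' : Config S) : Prop :=
  match l.dir with
  | .out =>
      (c.st l.snd, l, c'.st l.snd) ∈ S.delta l.snd ∧
      (∀ p, p ≠ l.snd → c'.st p = c.st p) ∧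
      c'.ch l.snd l.rcv = c.ch l.snd l.rcv ++ [l.msg] ∧
      (∀ p q, (p, q) ≠ (l.snd, l.rcv) → c'.ch p q = c.ch p q)
  | .inp =>
      (c.st l.rcv, l, c'.st l.rcv) ∈ S.delta l.rcv ∧
      (∀ p, p ≠ l.rcv → c'.st p = c.st p) ∧
      c.ch l.snd l.rcv = l.msg :: c'.ch l.snd l.rcv ∧
      (∀ p q, (p, q) ≠ (l.snd, l.rcv) → c'.ch p q = c.ch p q)

/-- Unlabelled transition relation. -/
def Step {P A : Type} (S : CS P A) (c c' : Config S) : Prop :=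
  ∃ l, StepL S c l c'

/-- Reachability between configurations. -/
def Reach {P A : Type} (S : CS P A) : Config S → Config S → Prop :=
  Relation.ReflTransGen (Step S)

/-- The set of configurations reachable from the initial configuration. -/
def RC {P A : Type} (S : CS P A) : Set (Config S) :=
  {c | Reach S S.initConfig c}

/-- A local state is final if it has no outgoing transition. -/
def FinalSt {Q P A : Type} (δ : Set (Q × Act P A × Q)) (q : Q) : Prop :=
  ∀ l q', (q, l, q') ∉ δ

/-- A local state is receiving if it is not final and all its outgoing
transitions are labelled with input actions. -/
def ReceivingSt {Q P A : Type} (δ : Set (Q × Act P A × Q)) (q : Q) : Prop :=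
  (∃ l q', (q, l, q') ∈ δ) ∧ ∀ l q', (q, l, q') ∈ δ → (l : Act P A).dir = Dir.inp

/-- A local state is mixed if it has at least one outgoing output-labelled
transition and at least one outgoing input-labelled transition. -/
def MixedSt {Q P A : Type} (δ : Set (Q × Act P A × Q)) (q : Q) : Prop :=
  (∃ l q', (q, l, q') ∈ δ ∧ (l : Act P A).dir = Dir.out) ∧
  (∃ l q', (q, l, q') ∈ δ ∧ (l : Act P A).dir = Dir.inp)

/-- A machine has no mixed states. -/
def NoMixed {Q P A : Type} (δ : Set (Q × Act P A × Q)) : Prop :=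
  ∀ q, ¬ MixedSt δ q

/-- Deadlock configuration: all channels empty but all machines in receiving states. -/
def DeadlockConfig {P A : Type} (S : CS P A) (c : Config S) : Prop :=
  (∀ p q, c.ch p q = []) ∧ ∀ p, ReceivingSt (S.delta p) (c.st p)

def DeadlockFree {P A : Type} (S : CS P A) : Prop :=
  ∀ c ∈ RC S, ¬ DeadlockConfig S c

/-- Orphan-message configuration: all machines final but some channel nonempty. -/
def OrphanConfig {P A : Type} (S : CS P A) (c : Config S) : Prop :=
  (∀ p, FinalSt (S.delta p) (c.st p)) ∧ ∃ p q, c.ch p q ≠ []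

def OrphanFree {P A : Type} (S : CS P A) : Prop :=
  ∀ c ∈ RC S, ¬ OrphanConfig S c

/-- Unspecified reception configuration: some machine `r` is in a receiving state and,
for every input transition of `r`, the corresponding channel is nonempty with a
first element different from the expected message. -/
def URConfig {P A : Type} (S : CS P A) (c : Config S) : Prop :=
  ∃ r, ReceivingSt (S.delta r) (c.st r) ∧
    ∀ s a q', (c.st r, Act.mk s r Dir.inp a, q') ∈ S.delta r →
      (c.ch s r ≠ [] ∧ ¬ ∃ w, c.ch s r = a :: w)

def ReceptionErrorFree {P A : Type} (S : CS P A) : Prop :=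
  ∀ c ∈ RC S, ¬ URConfig S c

/-- Progress: every reachable configuration has an outgoing transition or all
machines are in final states. -/
def ProgressProp {P A : Type} (S : CS P A) : Prop :=
  ∀ c ∈ RC S, (∃ c', Step S c c') ∨ ∀ p, FinalSt (S.delta p) (c.st p)

/-- `p`-lock configuration: `p` is in a receiving state and never occurs as the
subject of an action in any transition sequence from `c`. -/
def PLockConfig {P A : Type} (S : CS P A) (c : Config S) (p : P) : Prop :=
  ReceivingSt (S.delta p) (c.st p) ∧
  ∀ c1 l c2, Reach S c c1 → StepL S c1 l c2 → l.subject ≠ p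

def LockFree {P A : Type} (S : CS P A) : Prop :=
  ∀ c ∈ RC S, ∀ p, ¬ PLockConfig S c p

section Composition

variable {I : Type} {P : I → Type} {A : Type}

/-- Messages occurring in input actions of the machine of `p`. -/
def inMsgs {Pp A : Type} (S : CS Pp A) (p : Pp) : Set A :=
  {a | ∃ q s q', (q, Act.mk s p Dir.inp a, q') ∈ S.delta p}

/-- Messages occurring in output actions of the machine of `p`. -/
def outMsgs {Pp A : Type} (S : CS Pp A) (p : Pp) : Set A :=
  {a | ∃ q r q', (q, Act.mk p r Dir.out a, q') ∈ S.delta p}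

/-- `CM` is a connection model for the interfaces `hh i` of the family `S`
(the interface `h_i` is represented by its index `i`). -/
def IsConnModel (S : ∀ i, CS (P i) A) (hh : ∀ i, P i) (CM : Set (I × A × I)) : Prop :=
  ∀ i a,
    (a ∈ inMsgs (S i) (hh i) →
      ∃ j, j ≠ i ∧ a ∈ outMsgs (S j) (hh j) ∧ (i, a, j) ∈ CM) ∧
    (a ∈ outMsgs (S i) (hh i) →
      ∃ j, j ≠ i ∧ a ∈ inMsgs (S j) (hh j) ∧ (j, a, i) ∈ CM)

/-- `CM` is a strong connection model: additionally the connecting partner is unique. -/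
def IsStrongConnModel (S : ∀ i, CS (P i) A) (hh : ∀ i, P i) (CM : Set (I × A × I)) : Prop :=
  IsConnModel S hh CM ∧
  ∀ i a,
    (a ∈ inMsgs (S i) (hh i) → ∃! j, (i, a, j) ∈ CM) ∧
    (a ∈ outMsgs (S i) (hh i) → ∃! j, (j, a, i) ∈ CM)

/-- Conditions (*) and (**) for a candidate transition relation `d` of the local
connection policy of interface `hh i` (the name `k_i` is represented by `i`). -/
def PolicySat (S : ∀ i, CS (P i) A) (hh : ∀ i, P i) (CM : Set (I × A × I)) (i : I)
    (d : Set ((S i).St (hh i) × Act I A × (S i).St (hh i))) : Prop :=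
  (∀ q r a q', (q, Act.mk r (hh i) Dir.inp a, q') ∈ (S i).delta (hh i) →
      ∃ j, j ≠ i ∧ (i, a, j) ∈ CM ∧ (q, Act.mk i j Dir.out a, q') ∈ d) ∧
  (∀ q r a q', (q, Act.mk (hh i) r Dir.out a, q') ∈ (S i).delta (hh i) →
      ∃ j, j ≠ i ∧ (j, a, i) ∈ CM ∧ (q, Act.mk j i Dir.inp a, q') ∈ d)

/-- `d` belongs to the local connection policy set `IS(M_{h_i}, CM)`:
it is a minimal relation satisfying (*) and (**).  (The states `q̇` of the
policy machine are identified with the states `q` of `M_{h_i}`.) -/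
def InIS (S : ∀ i, CS (P i) A) (hh : ∀ i, P i) (CM : Set (I × A × I)) (i : I)
    (d : Set ((S i).St (hh i) × Act I A × (S i).St (hh i))) : Prop :=
  PolicySat S hh CM i d ∧ ∀ d', d' ⊆ d → PolicySat S hh CM i d' → d' = d

/-- The communicating system (over the participant type `I` of names `k_i`)
determined by the family of transition relations `Kd` of a connection policy. -/
def policyCS (S : ∀ i, CS (P i) A) (hh : ∀ i, P i)
    (Kd : ∀ i, Set ((S i).St (hh i) × Act I A × (S i).St (hh i))) : CS I A where
  St := fun i => (S i).St (hh i)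
  init := fun i => (S i).init (hh i)
  delta := Kd

/-- `Kd` is a connection policy for the interfaces `hh` complying with `CM`. -/
def IsConnPolicy (S : ∀ i, CS (P i) A) (hh : ∀ i, P i) (CM : Set (I × A × I))
    (Kd : ∀ i, Set ((S i).St (hh i) × Act I A × (S i).St (hh i))) : Prop :=
  ∀ i, InIS S hh CM i (Kd i)

/-- States of the gateway for interface `hh i`: the original states plus one
fresh state per transition of `M_{h_i}`. -/
abbrev GWState (S : ∀ i, CS (P i) A) (hh : ∀ i, P i) (i : I) : Type :=
  (S i).St (hh i) ⊕ ((S i).St (hh i) × Act (P i) A × (S i).St (hh i))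

/-- Lifting of a local action of system `i` to the composed participant type. -/
def liftAct (i : I) (l : Act (P i) A) : Act ((j : I) × P j) A :=
  Act.mk ⟨i, l.snd⟩ ⟨i, l.rcv⟩ l.dir l.msg

/-- Transition relation of the gateway `M_{h_i} ⟲ M_{k_i}`. -/
def GWdelta (S : ∀ i, CS (P i) A) (hh : ∀ i, P i)
    (Kd : ∀ i, Set ((S i).St (hh i) × Act I A × (S i).St (hh i))) (i : I) :
    Set (GWState S hh i × Act ((j : I) × P j) A × GWState S hh i) :=
  {x | ∃ q a q',
    (∃ s r, (q, Act.mk (hh i) s Dir.out a, q') ∈ (S i).delta (hh i) ∧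
        (q, Act.mk r i Dir.inp a, q') ∈ Kd i ∧
        (x = (Sum.inl q, Act.mk ⟨r, hh r⟩ ⟨i, hh i⟩ Dir.inp a,
              Sum.inr (q, Act.mk (hh i) s Dir.out a, q')) ∨
         x = (Sum.inr (q, Act.mk (hh i) s Dir.out a, q'),
              Act.mk ⟨i, hh i⟩ ⟨i, s⟩ Dir.out a, Sum.inl q'))) ∨
    (∃ s r, (q, Act.mk s (hh i) Dir.inp a, q') ∈ (S i).delta (hh i) ∧
        (q, Act.mk i r Dir.out a, q') ∈ Kd i ∧
        (x = (Sum.inl q, Act.mk ⟨i, s⟩ ⟨i, hh i⟩ Dir.inp a,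
              Sum.inr (q, Act.mk s (hh i) Dir.inp a, q')) ∨
         x = (Sum.inr (q, Act.mk s (hh i) Dir.inp a, q'),
              Act.mk ⟨i, hh i⟩ ⟨r, hh r⟩ Dir.out a, Sum.inl q')))}

open Classical in
/-- State type of the machine of participant `⟨i, p⟩` in the multicomposition:
the gateway state type if `p` is the interface of system `i`, the original
state type otherwise. -/
noncomputable def MCSt (S : ∀ i, CS (P i) A) (hh : ∀ i, P i) (x : (i : I) × P i) : Type :=
  if x.2 = hh x.1 then GWState S hh x.1 else (S x.1).St x.2

/-- The multicomposition `MC({S_i}, K)`: all machines of the single systems,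
with the machine of each interface `hh i` replaced by its gateway. -/
noncomputable def MC (S : ∀ i, CS (P i) A) (hh : ∀ i, P i)
    (Kd : ∀ i, Set ((S i).St (hh i) × Act I A × (S i).St (hh i))) :
    CS ((i : I) × P i) A where
  St := MCSt S hh
  init := fun x => by
    by_cases hp : x.2 = hh x.1
    · have h : MCSt S hh x = GWState S hh x.1 := by simp [MCSt, hp]
      rw [h]; exact Sum.inl ((S x.1).init (hh x.1))
    · have h : MCSt S hh x = (S x.1).St x.2 := by simp [MCSt, hp]
      rw [h]; exact (S x.1).init x.2
  delta := fun x => by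
    by_cases hp : x.2 = hh x.1
    · have h : MCSt S hh x = GWState S hh x.1 := by simp [MCSt, hp]
      rw [h]; exact GWdelta S hh Kd x.1
    · have h : MCSt S hh x = (S x.1).St x.2 := by simp [MCSt, hp]
      rw [h]
      exact {t | ∃ q l q', (q, l, q') ∈ (S x.1).delta x.2 ∧ t = (q, liftAct x.1 l, q')}

/-- The state of the gateway of interface `hh i` in a configuration of the
multicomposition, as an element of `GWState`. -/
noncomputable def toGW (S : ∀ i, CS (P i) A) (hh : ∀ i, P i) (i : I)
    (x : MCSt S hh ⟨i, hh i⟩) : GWState S hh i :=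
  cast (by simp [MCSt]) x

/-- The state of a non-interface participant in a configuration of the
multicomposition, as an element of its original state type. -/
noncomputable def toLoc (S : ∀ i, CS (P i) A) (hh : ∀ i, P i) {i : I} {p : P i}
    (hp : p ≠ hh i) (x : MCSt S hh ⟨i, p⟩) : (S i).St p :=
  cast (by simp [MCSt, hp]) x

/-- Projection of a configuration of the multicomposition to system `S i`,
assuming the gateway state of `hh i` is not a fresh intermediate state
(i.e. it is of the form `Sum.inl q`). -/
noncomputable def projSys (S : ∀ i, CS (P i) A) (hh : ∀ i, P i)
    (Kd : ∀ i, Set ((S i).St (hh i) × Act I A × (S i).St (hh i)))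
    (i : I) (s : Config (MC S hh Kd))
    (hq : ∃ q, toGW S hh i (s.st ⟨i, hh i⟩) = Sum.inl q) : Config (S i) where
  st := fun p => by
    by_cases hp : p = hh i
    · rw [hp]; exact hq.choose
    · exact toLoc S hh hp (s.st ⟨i, p⟩)
  ch := fun p q => s.ch ⟨i, p⟩ ⟨i, q⟩

/-- Projection of a configuration of the multicomposition to the connection
policy `K`, assuming no gateway is in a fresh intermediate state. -/
noncomputable def projPolicy (S : ∀ i, CS (P i) A) (hh : ∀ i, P i)
    (Kd : ∀ i, Set ((S i).St (hh i) × Act I A × (S i).St (hh i)))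
    (s : Config (MC S hh Kd))
    (hq : ∀ i, ∃ q, toGW S hh i (s.st ⟨i, hh i⟩) = Sum.inl q) :
    Config (policyCS S hh Kd) where
  st := fun i => (hq i).choose
  ch := fun i j => s.ch ⟨i, hh i⟩ ⟨j, hh j⟩

end Composition

/-!
In each system the interface may either send a message to its peer or receive one from it, and
the peer waits for the interface's message. The systems and the connection policy (which forwards
in both directions) are deadlock-free, since the interface, resp. its policy machine, can always
output first. A gateway, however, starts every forwarding with an input, either from its own
system or from the other gateway, so in the initial configuration of the multicomposition every
gateway and every peer waits on empty channels.
-/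

section Deadlock

variable {Q P A : Type} {δ : Set (Q × Act P A × Q)} {q : Q}

lemma not_receivingSt_of_mem_out {l : Act P A} {q' : Q} (h : (q, l, q') ∈ δ)
    (hl : l.dir = Dir.out) : ¬ ReceivingSt δ q := fun hr => by
  simpa [hl] using hr.2 l q' h

lemma FinalSt.not_receivingSt (h : FinalSt δ q) : ¬ ReceivingSt δ q :=
  fun ⟨⟨l, q', hl⟩, _⟩ => h l q' hl

lemma deadlockFree_of_forall_not_receivingSt {S : CS P A} (p : P)
    (h : ∀ q, ¬ ReceivingSt (S.delta p) q) : DeadlockFree S :=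
  fun _ _ hc => h _ (hc.2 p)

end Deadlock

section Multicomposition

variable {I : Type} {P : I → Type} {A : Type} {S : ∀ i, CS (P i) A} {hh : ∀ i, P i}
  {Kd : ∀ i, Set ((S i).St (hh i) × Act I A × (S i).St (hh i))}

lemma mem_mpr_set_iff {X Y B : Type} (e : X = Y) (h : Set (X × B × X) = Set (Y × B × Y))
    (s : Set (Y × B × Y)) (x x' : X) (b : B) :
    (x, b, x') ∈ h.mpr s ↔ (cast e x, b, cast e x') ∈ s := by
  subst e; rfl

lemma toGW_surjective (i : I) : Function.Surjective (toGW S hh i) :=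
  (Equiv.cast _).surjective

lemma toLoc_surjective {i : I} {p : P i} (hp : p ≠ hh i) : Function.Surjective (toLoc S hh hp) :=
  (Equiv.cast _).surjective

lemma toGW_init (i : I) :
    toGW S hh i ((MC S hh Kd).init ⟨i, hh i⟩) = Sum.inl ((S i).init (hh i)) := by
  simp [MC, toGW]

lemma toLoc_init {i : I} {p : P i} (hp : p ≠ hh i) :
    toLoc S hh hp ((MC S hh Kd).init ⟨i, p⟩) = (S i).init p := by
  simp [MC, toLoc, hp]

lemma mem_MC_delta_interface {i : I} {x x' : MCSt S hh ⟨i, hh i⟩} {l : Act ((j : I) × P j) A} :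
    (x, l, x') ∈ (MC S hh Kd).delta ⟨i, hh i⟩ ↔
      (toGW S hh i x, l, toGW S hh i x') ∈ GWdelta S hh Kd i := by
  simp only [MC, ↓reduceDIte]
  exact mem_mpr_set_iff _ _ _ _ _ _

lemma mem_MC_delta_of_ne {i : I} {p : P i} (hp : p ≠ hh i) {x x' : MCSt S hh ⟨i, p⟩}
    {l : Act ((j : I) × P j) A} :
    (x, l, x') ∈ (MC S hh Kd).delta ⟨i, p⟩ ↔
      ∃ l₀, (toLoc S hh hp x, l₀, toLoc S hh hp x') ∈ (S i).delta p ∧ l = liftAct i l₀ := by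
  simp only [MC, hp, ↓reduceDIte]
  refine (mem_mpr_set_iff (by simp [MCSt, hp]) _ _ _ _ _).trans ?_
  constructor
  · rintro ⟨q, l₀, q', h, heq⟩
    simp only [Prod.mk.injEq] at heq
    obtain ⟨rfl, rfl, rfl⟩ := heq
    exact ⟨l₀, h, rfl⟩
  · rintro ⟨l₀, h, rfl⟩
    exact ⟨_, l₀, _, h, rfl⟩

lemma dir_eq_inp_of_mem_GWdelta_inl {i : I} {q : (S i).St (hh i)} {l : Act ((j : I) × P j) A}
    {y : GWState S hh i} (h : (Sum.inl q, l, y) ∈ GWdelta S hh Kd i) : l.dir = Dir.inp := by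
  obtain ⟨q₀, a, q₀', ⟨s, r, -, -, h | h⟩ | ⟨s, r, -, -, h | h⟩⟩ := h <;>
    simp only [Prod.mk.injEq, reduceCtorEq, false_and] at h <;> rw [h.2.1]

lemma exists_mem_GWdelta_inl {CM : Set (I × A × I)} {i : I} (hwf : (S i).WellFormed)
    (hK : PolicySat S hh CM i (Kd i)) {q q' : (S i).St (hh i)} {l : Act (P i) A}
    (h : (q, l, q') ∈ (S i).delta (hh i)) :
    ∃ l' y, (Sum.inl q, l', y) ∈ GWdelta S hh Kd i := by
  obtain ⟨snd, rcv, dir, a⟩ := l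
  have hsubj := (hwf _ _ h).1
  cases dir
  · obtain rfl : snd = hh i := hsubj
    obtain ⟨j, -, -, hj⟩ := hK.2 q rcv a q' h
    exact ⟨_, _, q, a, q', Or.inl ⟨rcv, j, h, hj, Or.inl rfl⟩⟩
  · obtain rfl : rcv = hh i := hsubj
    obtain ⟨j, -, -, hj⟩ := hK.1 q snd a q' h
    exact ⟨_, _, q, a, q', Or.inr ⟨snd, j, h, hj, Or.inl rfl⟩⟩

lemma receivingSt_GWdelta_inl {CM : Set (I × A × I)} {i : I} (hwf : (S i).WellFormed)
    (hK : PolicySat S hh CM i (Kd i)) {q : (S i).St (hh i)}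
    (hq : ¬ FinalSt ((S i).delta (hh i)) q) :
    ReceivingSt (GWdelta S hh Kd i) (Sum.inl q) := by
  obtain ⟨l, q', h⟩ : ∃ l q', (q, l, q') ∈ (S i).delta (hh i) := by
    simpa [FinalSt] using hq
  exact ⟨exists_mem_GWdelta_inl hwf hK h,
    fun _ _ => dir_eq_inp_of_mem_GWdelta_inl⟩

lemma receivingSt_MC_interface {i : I} {x : MCSt S hh ⟨i, hh i⟩}
    (h : ReceivingSt (GWdelta S hh Kd i) (toGW S hh i x)) :
    ReceivingSt ((MC S hh Kd).delta ⟨i, hh i⟩) x := by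
  obtain ⟨⟨l, y, hy⟩, hinp⟩ := h
  obtain ⟨x', rfl⟩ := toGW_surjective i y
  exact ⟨⟨l, x', mem_MC_delta_interface.2 hy⟩,
    fun l x' hx' => hinp l _ (mem_MC_delta_interface.1 hx')⟩

lemma receivingSt_MC_of_ne {i : I} {p : P i} (hp : p ≠ hh i) {x : MCSt S hh ⟨i, p⟩}
    (h : ReceivingSt ((S i).delta p) (toLoc S hh hp x)) :
    ReceivingSt ((MC S hh Kd).delta ⟨i, p⟩) x := by
  obtain ⟨⟨l, y, hy⟩, hinp⟩ := h
  obtain ⟨x', rfl⟩ := toLoc_surjective hp y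
  refine ⟨⟨liftAct i l, x', (mem_MC_delta_of_ne hp).2 ⟨l, hy, rfl⟩⟩, ?_⟩
  intro l x' hx'
  obtain ⟨l₀, h₀, rfl⟩ := (mem_MC_delta_of_ne hp).1 hx'
  exact hinp _ _ h₀

theorem deadlockConfig_MC_initConfig {CM : Set (I × A × I)} (hwf : ∀ i, (S i).WellFormed)
    (hK : ∀ i, PolicySat S hh CM i (Kd i))
    (hiface : ∀ i, ¬ FinalSt ((S i).delta (hh i)) ((S i).init (hh i)))
    (hpeer : ∀ i p, p ≠ hh i → ReceivingSt ((S i).delta p) ((S i).init p)) :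
    DeadlockConfig (MC S hh Kd) (MC S hh Kd).initConfig := by
  refine ⟨fun _ _ => rfl, ?_⟩
  rintro ⟨i, p⟩
  by_cases hp : p = hh i
  · subst hp
    apply receivingSt_MC_interface
    erw [toGW_init (Kd := Kd)]
    exact receivingSt_GWdelta_inl (hwf i) (hK i) (hiface i)
  · apply receivingSt_MC_of_ne hp
    erw [toLoc_init (Kd := Kd)]
    exact hpeer i p hp

end Multicomposition

namespace MixedCounterexample

def ifaceDelta : Set (Bool × Act Bool Unit × Bool) :=
  {(false, ⟨false, true, .out, ()⟩, true), (false, ⟨true, false, .inp, ()⟩, true)}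

def peerDelta : Set (Bool × Act Bool Unit × Bool) :=
  {(false, ⟨false, true, .inp, ()⟩, true)}

/-- Both systems are the same: participant `false` is the interface, whose initial state is
mixed, and `true` is its peer. -/
abbrev sys (_ : Bool) : CS Bool Unit where
  St _ := Bool
  init _ := false
  delta
    | false => ifaceDelta
    | true => peerDelta

def iface (_ : Bool) : Bool := false

def connModel : Set (Bool × Unit × Bool) := {x | x.1 ≠ x.2.2}

def policy (b : Bool) : Set (Bool × Act Bool Unit × Bool) :=
  {(false, ⟨b, !b, .out, ()⟩, true), (false, ⟨!b, b, .inp, ()⟩, true)}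

lemma sys_wellFormed (b : Bool) : (sys b).WellFormed := by
  rintro (_ | _) t ht
  · rcases ht with rfl | rfl <;> exact ⟨rfl, by simp⟩
  · obtain rfl := ht
    exact ⟨rfl, by simp⟩

lemma mixedSt_ifaceDelta : MixedSt ifaceDelta false :=
  ⟨⟨_, true, Or.inl rfl, rfl⟩, ⟨_, true, Or.inr rfl, rfl⟩⟩

lemma not_finalSt_ifaceDelta : ¬ FinalSt ifaceDelta false :=
  fun h => h _ true (Or.inl rfl)

lemma receivingSt_peerDelta : ReceivingSt peerDelta false := by
  refine ⟨⟨_, true, rfl⟩, ?_⟩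
  rintro l q' ⟨-, rfl, -⟩
  rfl

lemma isConnModel : IsConnModel sys iface connModel := fun i _ =>
  ⟨fun _ => ⟨!i, by simp, ⟨false, true, true, Or.inl rfl⟩, by simp [connModel]⟩,
    fun _ => ⟨!i, by simp, ⟨false, true, true, Or.inr rfl⟩, by simp [connModel]⟩⟩

lemma finalSt_ifaceDelta : FinalSt ifaceDelta true := by
  simp [FinalSt, ifaceDelta]

lemma finalSt_policy (b : Bool) : FinalSt (policy b) true := by
  simp [FinalSt, policy]

lemma policySat (b : Bool) : PolicySat sys iface connModel b (policy b) := by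
  constructor
  · rintro q r a q' (h | h) <;>
      simp only [Set.mem_singleton_iff, Prod.mk.injEq, Act.mk.injEq, reduceCtorEq, false_and,
        and_false] at h
    obtain ⟨rfl, ⟨rfl, -, -, -⟩, rfl⟩ := h
    exact ⟨!b, Bool.not_ne_self b, (Bool.not_ne_self b).symm, Or.inl rfl⟩
  · rintro q r a q' (h | h) <;>
      simp only [Set.mem_singleton_iff, Prod.mk.injEq, Act.mk.injEq, reduceCtorEq, false_and,
        and_false] at h
    obtain ⟨rfl, ⟨-, rfl, -, -⟩, rfl⟩ := h
    exact ⟨!b, Bool.not_ne_self b, Bool.not_ne_self b, Or.inr rfl⟩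

lemma isConnPolicy : IsConnPolicy sys iface connModel policy := by
  refine fun b => ⟨policySat b, fun d hd hsat => hd.antisymm ?_⟩
  obtain ⟨j, hj, -, hout⟩ := hsat.1 false true () true (Or.inr rfl)
  obtain ⟨k, hk, -, hin⟩ := hsat.2 false true () true (Or.inl rfl)
  obtain rfl := Bool.eq_not_of_ne hj
  obtain rfl := Bool.eq_not_of_ne hk
  rintro t (rfl | rfl)
  exacts [hout, hin]

lemma sys_deadlockFree (b : Bool) : DeadlockFree (sys b) :=
  deadlockFree_of_forall_not_receivingSt false <| Bool.forall_bool.2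
    ⟨not_receivingSt_of_mem_out (Or.inl rfl) rfl, FinalSt.not_receivingSt finalSt_ifaceDelta⟩

lemma policyCS_deadlockFree : DeadlockFree (policyCS sys iface policy) :=
  deadlockFree_of_forall_not_receivingSt false <| Bool.forall_bool.2
    ⟨not_receivingSt_of_mem_out (Or.inl rfl) rfl, FinalSt.not_receivingSt (finalSt_policy false)⟩

end MixedCounterexample

end CFSM

open CFSM.MixedCounterexample

open CFSM in
/-- the no-mixed-state assumption cannot be dropped for
deadlock-freeness preservation. -/
theorem deadlockFree_not_preserved_with_mixed_states :
    ∃ (P : Bool → Type) (A : Type) (S : ∀ b, CS (P b) A) (hh : ∀ b, P b)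
      (CM : Set (Bool × A × Bool))
      (Kd : ∀ b, Set ((S b).St (hh b) × Act Bool A × (S b).St (hh b))),
      (∀ b, Finite (P b)) ∧ Finite A ∧ (∀ b p, Finite ((S b).St p)) ∧
      (∀ b, (S b).WellFormed) ∧
      (∀ b, ∃ q, MixedSt ((S b).delta (hh b)) q) ∧
      IsConnModel S hh CM ∧
      IsConnPolicy S hh CM Kd ∧
      (∀ b, DeadlockFree (S b)) ∧
      DeadlockFree (policyCS S hh Kd) ∧
      DeadlockConfig (MC S hh Kd) (MC S hh Kd).initConfig ∧
      ¬ DeadlockFree (MC S hh Kd) := by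
  have hdl : DeadlockConfig (MC sys iface policy) (MC sys iface policy).initConfig := by
    refine deadlockConfig_MC_initConfig sys_wellFormed policySat
      (fun _ => not_finalSt_ifaceDelta) fun b p hp => ?_
    obtain rfl : p = true := by simpa [iface] using hp
    exact receivingSt_peerDelta
  exact ⟨fun _ => Bool, Unit, sys, iface, connModel, policy, fun _ => inferInstance,
    inferInstance, fun _ _ => inferInstanceAs (Finite Bool), sys_wellFormed,
    fun _ => ⟨false, mixedSt_ifaceDelta⟩, isConnModel, isConnPolicy, sys_deadlockFree,
    policyCS_deadlockFree, hdl, fun hdf => hdf _ .refl hdl⟩
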